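/- arXiv:0804.0631 — 5 statements merged into one kernel-verified Lean document; each statement's English description precedes it below -/
import Mathlib

section
/- Let ε, δ ∈ {1, −1} and N ≥ 1. Suppose φ_1, …, φ_N : ℤ × ℝ × ℝ → ℝ are twice continuously differentiable in (x,s), λ_{ij} : ℝ → ℝ and μ_{ij} : ℝ → ℝ (1 ≤ i,j ≤ N) are functions, and for all n ∈ ℤ, x, s ∈ ℝ and 1 ≤ i ≤ N: ∂φ_i(n,x,s)/∂x = ε φ_i(n+δ,x,s) + Σ_{j=1}^N λ_{ij}(x) φ_j(n,x,s) and ∂φ_i(n,x,s)/∂s = −ε φ_i(n−δ,x,s) + Σ_{j=1}^N μ_{ij}(s) φ_j(n,x,s). Then the Casorati determinant τ_n(x,s) = det( (φ_i(n+j−1,x,s))_{1≤i,j≤N} ) solves the bilinear 2D Toda lattice equation: ∂²τ_n/∂s∂x · τ_n − (∂τ_n/∂s)(∂τ_n/∂x) = τ_{n+1} τ_{n−1} − τ_n² for all n, x, s. -/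
/-!
Write `|c₁, …, c_N|` for the determinant with columns `Φ(c₁), …, Φ(c_N)`, where
`Φ(m) = (φ₁(m), …, φ_N(m))ᵀ`, so that `τ_n = |n, n+1, …, n+N-1|`. Differentiating column by
column, the dispersion relations turn `∂_x` into the sum over columns of a shift by `δ` plus
`tr Λ` times the determinant; for `δ = 1` every shifted determinant except the one with the last
column shifted has a repeated column. Hence `∂_x τ = ε X + (tr Λ) τ`, `∂_s τ = -ε Y + (tr M) τ`
and, for `N ≥ 2`, `∂_s X = -ε (Z + τ) + (tr M) X`, where `X = |n, …, n+N-2, n+N|`,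
`Y = |n-1, n+1, …, n+N-1|` and `Z = |n-1, n+1, …, n+N-2, n+N|`. The bilinear equation then
reduces to the three-term Plücker relation `Z τ = X Y - τ_{n+1} τ_{n-1}`, which is the Laplace
expansion of a determinant with a repeated row. The case `δ = -1` follows from `δ = 1` by the
reflection `n ↦ -n`, under which the Casoratian changes by a column reversal and the Toda
equation is invariant.
-/

/-- A function `τ`, written `τ n x s`, solves the bilinear 2D Toda lattice equation if
`∂²τ_n/∂s∂x · τ_n − (∂τ_n/∂s)(∂τ_n/∂x) = τ_{n+1} τ_{n−1} − τ_n²` for all `n, x, s`. -/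
def SolvesBilinearToda (τ : ℤ → ℝ → ℝ → ℝ) : Prop :=
  ∀ (n : ℤ) (x s : ℝ),
    deriv (fun s' => deriv (fun x' => τ n x' s') x) s * τ n x s -
        deriv (fun s' => τ n x s') s * deriv (fun x' => τ n x' s) x =
      τ (n + 1) x s * τ (n - 1) x s - (τ n x s) ^ 2

/-- The Casorati determinant `τ_n(x,s) = det( (φ_i(n+j−1,x,s))_{1≤i,j≤N} )`. -/
def casorati {N : ℕ} (φ : Fin N → ℤ → ℝ → ℝ → ℝ) : ℤ → ℝ → ℝ → ℝ :=
  fun n x s => Matrix.det (Matrix.of fun i j : Fin N => φ i (n + (j.1 : ℤ)) x s)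

open Matrix Finset Function

namespace Matrix

theorem hasDerivAt_det {𝕜 : Type*} [NontriviallyNormedField 𝕜] {n : Type*} [Fintype n]
    [DecidableEq n] {A : 𝕜 → Matrix n n 𝕜} {A' : Matrix n n 𝕜} {t : 𝕜}
    (h : ∀ i j, HasDerivAt (fun t => A t i j) (A' i j) t) :
    HasDerivAt (fun t => (A t).det) (∑ j, ((A t).updateCol j fun i => A' i j).det) t := by
  simp only [det_apply, Units.smul_def, zsmul_eq_mul]
  have hprod (σ : Equiv.Perm n) : HasDerivAt (fun t => ∏ i, A t (σ i) i)
      (∑ j, (∏ i ∈ univ.erase j, A t (σ i) i) • A' (σ j) j) t :=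
    HasDerivAt.fun_finsetProd fun i _ => h (σ i) i
  refine (HasDerivAt.fun_sum fun σ _ =>
    (hprod σ).const_mul ((Equiv.Perm.sign σ : ℤ) : 𝕜)).congr_deriv ?_
  rw [sum_comm]
  refine sum_congr rfl fun σ _ => ?_
  rw [mul_sum]
  refine sum_congr rfl fun j _ => ?_
  rw [← mul_prod_erase univ _ (mem_univ j), smul_eq_mul, mul_comm (∏ i ∈ _, _)]
  congr 2
  · simp
  · exact prod_congr rfl fun i hi => by simp [ne_of_mem_erase hi]

variable {R : Type*} [CommRing R]

theorem sum_det_updateCol_mul {n : Type*} [Fintype n] [DecidableEq n] (A L : Matrix n n R) :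
    ∑ j, (A.updateCol j fun i => (L * A) i j).det = L.trace * A.det := by
  simp_rw [← cramer_apply, cramer_eq_adjugate_mulVec]
  calc ∑ j, (A.adjugate *ᵥ fun i => (L * A) i j) j = (A.adjugate * (L * A)).trace := by
        simp [trace, mulVec, dotProduct, mul_apply]
    _ = (A * A.adjugate * L).trace := by
        rw [← Matrix.mul_assoc, trace_mul_comm, Matrix.mul_assoc]
    _ = L.trace * A.det := by
        rw [mul_adjugate, smul_mul, one_mul, trace_smul, smul_eq_mul, mul_comm]

theorem sum_neg_one_pow_mul_det_succAbove_smul_eq_zero {N : ℕ} (u : Fin (N + 1) → Fin N → R) :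
    ∑ k : Fin (N + 1), ((-1) ^ (k : ℕ) * (of fun i j => u (k.succAbove j) i).det) • u k = 0 := by
  ext i
  -- prepending the row `(u k i)_k` to the rows of `(u k)_k` repeats a row; expand along it
  let B : Matrix (Fin (N + 1)) (Fin (N + 1)) R :=
    of fun r k => (Fin.cons (u k i) (u k) : Fin (N + 1) → R) r
  have hB : B.det = 0 := det_zero_of_row_eq (Fin.succ_ne_zero i).symm (by ext k; simp [B])
  rw [det_succ_row_zero] at hB
  rw [Pi.zero_apply, ← hB, Finset.sum_apply]
  refine sum_congr rfl fun k _ => ?_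
  simp [B, submatrix]
  ring

end Matrix

variable {R : Type*} [CommRing R]

/-- Hirota's `|c₁, …, c_N|`. -/
def casoratiDet {n : Type*} [Fintype n] [DecidableEq n] (v : ℤ → n → R) (c : n → ℤ) : R :=
  (of fun i j => v (c j) i).det

/-- For `F = casoratiDet v`, the effect of a derivative that acts on `v` as the shift by `d`. -/
def shiftSum {ι : Type*} [Fintype ι] [DecidableEq ι] (F : (ι → ℤ) → R) (d : ℤ) (c : ι → ℤ) : R :=
  ∑ j, F (update c j (c j + d))

def consecutive {N : ℕ} (n : ℤ) : Fin N → ℤ := fun j => n + (j : ℕ)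

section CasoratiDet

variable {n : Type*} [Fintype n] [DecidableEq n] (v : ℤ → n → R)

theorem casoratiDet_eq_zero_of_eq {c : n → ℤ} {j k : n} (hjk : j ≠ k) (h : c j = c k) :
    casoratiDet v c = 0 :=
  det_zero_of_column_eq hjk fun i => by simp [h]

theorem casoratiDet_comp_perm (c : n → ℤ) (σ : Equiv.Perm n) :
    casoratiDet v (c ∘ σ) = (Equiv.Perm.sign σ : ℤ) * casoratiDet v c :=
  det_permute' σ (of fun i j => v (c j) i)

theorem casoratiDet_update (c : n → ℤ) (p : n) (m : ℤ) :
    casoratiDet v (update c p m) = ((of fun i j => v (c j) i).updateCol p (v m)).det := by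
  unfold casoratiDet
  congr 1
  ext i j
  by_cases h : j = p <;> simp [h]

theorem shiftSum_casoratiDet_eq_sum_of_collide {c : n → ℤ} {d : ℤ} (S : Finset n)
    (h : ∀ j ∉ S, ∃ k ≠ j, c k = c j + d) :
    shiftSum (casoratiDet v) d c = ∑ j ∈ S, casoratiDet v (update c j (c j + d)) := by
  refine (sum_subset (subset_univ S) fun j _ hj => ?_).symm
  obtain ⟨k, hkj, hk⟩ := h j hj
  exact casoratiDet_eq_zero_of_eq v hkj.symm (by simp [hkj, hk])

theorem hasDerivAt_casoratiDet {𝕜 : Type*} [NontriviallyNormedField 𝕜] {v : ℤ → 𝕜 → n → 𝕜}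
    {a t : 𝕜} {d : ℤ} {L : Matrix n n 𝕜}
    (hv : ∀ m, HasDerivAt (v m) (a • v (m + d) t + L *ᵥ v m t) t) (c : n → ℤ) :
    HasDerivAt (fun t => casoratiDet (fun m => v m t) c)
      (a * shiftSum (casoratiDet fun m => v m t) d c +
        L.trace * casoratiDet (fun m => v m t) c) t := by
  let A : Matrix n n 𝕜 := of fun i j => v (c j) t i
  have hcol (j : n) : L *ᵥ v (c j) t = fun i => (L * A) i j := by
    ext i
    simp [A, mulVec, dotProduct, mul_apply]
  refine (hasDerivAt_det fun i j => hasDerivAt_pi.1 (hv (c j)) i).congr_deriv ?_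
  calc ∑ j, (A.updateCol j fun i => (a • v (c j + d) t + L *ᵥ v (c j) t) i).det
      = ∑ j, (a * (A.updateCol j (v (c j + d) t)).det +
          (A.updateCol j fun i => (L * A) i j).det) :=
        sum_congr rfl fun j _ => by
          rw [← hcol, ← det_updateCol_smul, ← det_updateCol_add]
    _ = _ := by
        rw [sum_add_distrib, ← mul_sum, sum_det_updateCol_mul]
        simp only [shiftSum, casoratiDet_update]
        rfl

end CasoratiDet

theorem casoratiDet_plucker {N : ℕ} (v : ℤ → Fin N → R) (c : Fin N → ℤ) (p : Fin N)
    (d : Fin (N + 1) → ℤ) :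
    ∑ k : Fin (N + 1), (-1) ^ (k : ℕ) * casoratiDet v (update c p (d k)) *
      casoratiDet v (d ∘ k.succAbove) = 0 := by
  let A : Matrix (Fin N) (Fin N) R := of fun i j => v (c j) i
  calc ∑ k : Fin (N + 1), (-1) ^ (k : ℕ) * casoratiDet v (update c p (d k)) *
        casoratiDet v (d ∘ k.succAbove)
      = cramer A (∑ k : Fin (N + 1),
          ((-1) ^ (k : ℕ) * casoratiDet v (d ∘ k.succAbove)) • v (d k)) p := by
        rw [map_sum, Finset.sum_apply]
        refine sum_congr rfl fun k _ => ?_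
        rw [map_smul, Pi.smul_apply, smul_eq_mul, cramer_apply, casoratiDet_update]
        ring
    _ = 0 := by
        have h := sum_neg_one_pow_mul_det_succAbove_smul_eq_zero fun k => v (d k)
        exact (congrArg (cramer A · p) h).trans (by simp)

section Consecutive

variable {M : ℕ}

theorem consecutive_apply (n : ℤ) (j : Fin M) : consecutive n j = n + (j : ℕ) := rfl

theorem consecutive_eq_cons (n : ℤ) :
    (consecutive n : Fin (M + 1) → ℤ) = Fin.cons n (consecutive (n + 1)) := by
  funext j
  refine Fin.cases ?_ (fun j => ?_) j <;> simp [consecutive_apply]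
  ring

theorem consecutive_eq_snoc (n : ℤ) :
    (consecutive n : Fin (M + 1) → ℤ) = Fin.snoc (consecutive n) (n + M) := by
  funext j
  refine Fin.lastCases ?_ (fun j => ?_) j <;> simp [consecutive_apply]

variable (v : ℤ → Fin (M + 1) → R) (n : ℤ)

theorem shiftSum_casoratiDet_consecutive_one :
    shiftSum (casoratiDet v) 1 (consecutive n) =
      casoratiDet v (Fin.snoc (consecutive n) (n + M + 1)) := by
  rw [shiftSum_casoratiDet_eq_sum_of_collide v {Fin.last M}, sum_singleton, consecutive_eq_snoc,
    Fin.update_snoc_last, Fin.snoc_last]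
  intro j hj
  have hj : (j : ℕ) < M := Fin.val_lt_last (by simpa using hj)
  refine ⟨⟨j + 1, by omega⟩, fun h => by simp [Fin.ext_iff] at h, ?_⟩
  simp [consecutive_apply]
  ring

theorem shiftSum_casoratiDet_consecutive_neg_one :
    shiftSum (casoratiDet v) (-1) (consecutive n) =
      casoratiDet v (Fin.cons (n - 1) (consecutive (n + 1))) := by
  rw [shiftSum_casoratiDet_eq_sum_of_collide v {0}, sum_singleton, consecutive_eq_cons,
    Fin.update_cons_zero, Fin.cons_zero, ← sub_eq_add_neg]
  intro j hj
  have hj : 0 < (j : ℕ) := Fin.pos_iff_ne_zero.2 (by simpa using hj)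
  refine ⟨⟨j - 1, by omega⟩, fun h => by simp [Fin.ext_iff] at h; omega, ?_⟩
  simp [consecutive_apply]
  omega

end Consecutive

section AtLeastTwo

variable {m : ℕ} (v : ℤ → Fin (m + 2) → R) (n : ℤ)

theorem shiftSum_casoratiDet_snoc_consecutive_neg_one :
    shiftSum (casoratiDet v) (-1) (Fin.snoc (consecutive n) (n + (m + 1 : ℕ) + 1)) =
      casoratiDet v (Fin.cons (n - 1) (Fin.snoc (consecutive (n + 1)) (n + (m + 1 : ℕ) + 1))) +
        casoratiDet v (consecutive n) := by
  rw [shiftSum_casoratiDet_eq_sum_of_collide v {0, Fin.last (m + 1)},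
    sum_pair (Fin.last_pos.ne : (0 : Fin (m + 2)) ≠ _)]
  · congr 2
    · rw [consecutive_eq_cons, ← Fin.cons_snoc_eq_snoc_cons, Fin.update_cons_zero, Fin.cons_zero,
        sub_eq_add_neg]
    · rw [Fin.update_snoc_last, Fin.snoc_last, consecutive_eq_snoc (M := m + 1)]
      ring_nf
  intro j hj
  simp only [mem_insert, mem_singleton, not_or] at hj
  have hj0 : 0 < (j : ℕ) := Fin.pos_iff_ne_zero.2 hj.1
  have hjl : (j : ℕ) < m + 1 := Fin.val_lt_last hj.2
  refine ⟨⟨j - 1, by omega⟩, fun h => by simp [Fin.ext_iff] at h; omega, ?_⟩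
  simp [Fin.snoc, consecutive_apply, hjl, show (j : ℕ) - 1 < m + 1 by omega]
  omega

theorem casoratiDet_consecutive_succ_eq_rotate :
    casoratiDet v (consecutive (n + 1)) =
      (-1) ^ (m + 1) * casoratiDet v (Fin.cons (n + (m + 1 : ℕ) + 1) (consecutive (n + 1))) := by
  have h : (consecutive (n + 1) : Fin (m + 2) → ℤ) =
      Fin.cons (n + (m + 1 : ℕ) + 1) (consecutive (n + 1)) ∘ finRotate (m + 2) := by
    rw [consecutive_eq_snoc, show n + 1 + ((m + 1 : ℕ) : ℤ) = n + (m + 1 : ℕ) + 1 by ring]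
    exact Fin.snoc_eq_cons_rotate _ _
  rw [h, casoratiDet_comp_perm, sign_finRotate]
  push_cast
  rfl

theorem casoratiDet_consecutive_plucker :
    casoratiDet v (Fin.cons (n - 1) (Fin.snoc (consecutive (n + 1)) (n + (m + 1 : ℕ) + 1))) *
        casoratiDet v (consecutive n) =
      casoratiDet v (Fin.snoc (consecutive n) (n + (m + 1 : ℕ) + 1)) *
          casoratiDet v (Fin.cons (n - 1) (consecutive (n + 1))) -
        casoratiDet v (consecutive (n + 1)) * casoratiDet v (consecutive (n - 1)) := by
  set a : ℤ := n + (m + 1 : ℕ) + 1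
  -- the columns `n-1, n, n+1, …, n+m, n+m+2`; all terms but three have a repeated column
  set d : Fin (m + 3) → ℤ := Fin.cons (n - 1) (Fin.cons n (Fin.snoc (consecutive (n + 1)) a))
  have h := casoratiDet_plucker v (consecutive n) 0 d
  rw [Fin.sum_univ_succ, Fin.sum_univ_succ, Fin.sum_univ_castSucc] at h
  have hmid (i : Fin m) :
      casoratiDet v (update (consecutive n) 0 (d i.castSucc.succ.succ)) = 0 := by
    refine casoratiDet_eq_zero_of_eq v (Fin.succ_ne_zero i.castSucc).symm ?_
    simp [d, consecutive_apply]
    ring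
  have hX : (Fin.cons n (Fin.snoc (consecutive (n + 1)) a) : Fin (m + 2) → ℤ) =
      Fin.snoc (consecutive n) a := by
    rw [consecutive_eq_cons n (M := m), Fin.cons_snoc_eq_snoc_cons]
  have e0 : d ∘ Fin.succAbove 0 = Fin.snoc (consecutive n) a := by
    rw [Fin.succAbove_zero, Fin.cons_comp_succ, hX]
  have e1 : d ∘ (Fin.succ 0).succAbove = Fin.cons (n - 1) (Fin.snoc (consecutive (n + 1)) a) := by
    rw [Fin.cons_comp_succ_succAbove, Fin.removeNth_zero, Fin.tail_cons]
  have e2 : d ∘ (Fin.last m).succ.succ.succAbove = consecutive (n - 1) := by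
    rw [Fin.cons_comp_succ_succAbove, Fin.succ_last, Fin.removeNth_last, hX, Fin.init_snoc,
      consecutive_eq_cons (n - 1), sub_add_cancel]
  have hY : update (consecutive n : Fin (m + 2) → ℤ) 0 (n - 1) =
      Fin.cons (n - 1) (consecutive (n + 1)) := by
    rw [consecutive_eq_cons n, Fin.update_cons_zero]
  have hτ : update (consecutive n : Fin (m + 2) → ℤ) 0 n = consecutive n := by
    rw [consecutive_eq_cons n (M := m + 1), Fin.update_cons_zero]
  have hA : update (consecutive n : Fin (m + 2) → ℤ) 0 a = Fin.cons a (consecutive (n + 1)) := by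
    rw [consecutive_eq_cons n, Fin.update_cons_zero]
  simp only [hmid, mul_zero, zero_mul, sum_const_zero, e0, e1, e2] at h
  simp only [d, Fin.cons_zero, Fin.cons_succ, Fin.snoc_last, hY, hτ, hA] at h
  rw [casoratiDet_consecutive_succ_eq_rotate]
  simp only [Fin.val_zero, Fin.val_succ, Fin.val_last] at h
  linear_combination -h

end AtLeastTwo

theorem casoratiDet_consecutive_toda {M : ℕ} (v : ℤ → Fin (M + 1) → R) (n : ℤ) :
    casoratiDet v (Fin.snoc (consecutive n) (n + M + 1)) *
        casoratiDet v (Fin.cons (n - 1) (consecutive (n + 1))) -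
      shiftSum (casoratiDet v) (-1) (Fin.snoc (consecutive n) (n + M + 1)) *
        casoratiDet v (consecutive n) =
      casoratiDet v (consecutive (n + 1)) * casoratiDet v (consecutive (n - 1)) -
        casoratiDet v (consecutive n) ^ 2 := by
  rcases M with _ | m
  · have hX : (Fin.snoc (consecutive n) (n + (0 : ℕ) + 1) : Fin 1 → ℤ) = consecutive (n + 1) := by
      funext j
      simp [Fin.fin_one_eq_zero j, consecutive_apply, Fin.snoc]
    have hY : (Fin.cons (n - 1) (consecutive (n + 1)) : Fin 1 → ℤ) = consecutive (n - 1) := by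
      funext j
      simp [Fin.fin_one_eq_zero j, consecutive_apply]
    have hW : shiftSum (casoratiDet v) (-1) (consecutive (n + 1)) =
        casoratiDet v (consecutive n) := by
      rw [shiftSum, Fin.sum_univ_one]
      congr 1
      funext j
      simp [Fin.fin_one_eq_zero j, consecutive_apply]
    rw [hX, hY, hW]
    ring
  · rw [shiftSum_casoratiDet_snoc_consecutive_neg_one]
    linear_combination -casoratiDet_consecutive_plucker v n

theorem solvesBilinearToda_const (a : ℝ) : SolvesBilinearToda fun _ _ _ => a := by
  intro n x s
  simp [sq]

theorem SolvesBilinearToda.const_mul_comp_sub {τ : ℤ → ℝ → ℝ → ℝ} (h : SolvesBilinearToda τ)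
    (a : ℝ) (k : ℤ) : SolvesBilinearToda fun n x s => a * τ (k - n) x s := by
  intro n x s
  simp only [deriv_const_mul_field']
  rw [show k - (n + 1) = k - n - 1 by ring, show k - (n - 1) = k - n + 1 by ring]
  linear_combination a ^ 2 * h (k - n) x s

theorem solvesBilinearToda_of_hasDerivAt {τ X Y W : ℤ → ℝ → ℝ → ℝ} {a b : ℝ → ℝ} {ε : ℝ}
    (hε : ε ^ 2 = 1)
    (hτx : ∀ n x s, HasDerivAt (fun x => τ n x s) (ε * X n x s + a x * τ n x s) x)
    (hτs : ∀ n x s, HasDerivAt (fun s => τ n x s) (-ε * Y n x s + b s * τ n x s) s)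
    (hXs : ∀ n x s, HasDerivAt (fun s => X n x s) (-ε * W n x s + b s * X n x s) s)
    (hid : ∀ n x s, X n x s * Y n x s - W n x s * τ n x s =
      τ (n + 1) x s * τ (n - 1) x s - τ n x s ^ 2) :
    SolvesBilinearToda τ := by
  intro n x s
  have hτx' : (fun s => deriv (fun x => τ n x s) x) = fun s => ε * X n x s + a x * τ n x s :=
    funext fun s => (hτx n x s).deriv
  have hτxs : HasDerivAt (fun s => ε * X n x s + a x * τ n x s)
      (ε * (-ε * W n x s + b s * X n x s) + a x * (-ε * Y n x s + b s * τ n x s)) s :=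
    ((hXs n x s).const_mul ε).add ((hτs n x s).const_mul (a x))
  rw [hτx', hτxs.deriv, (hτs n x s).deriv, (hτx n x s).deriv]
  linear_combination ε ^ 2 * hid n x s + (τ (n + 1) x s * τ (n - 1) x s - τ n x s ^ 2) * hε

theorem casorati_eq_casoratiDet {N : ℕ} (φ : Fin N → ℤ → ℝ → ℝ → ℝ) :
    casorati φ = fun n x s => casoratiDet (fun m i => φ i m x s) (consecutive n) := rfl

theorem casorati_fin_zero (φ : Fin 0 → ℤ → ℝ → ℝ → ℝ) : casorati φ = fun _ _ _ => 1 := by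
  funext n x s
  exact det_isEmpty

theorem casorati_comp_neg {N : ℕ} (φ : Fin N → ℤ → ℝ → ℝ → ℝ) (n : ℤ) (x s : ℝ) :
    casorati (fun i m => φ i (-m)) n x s =
      (Equiv.Perm.sign (Fin.revPerm : Equiv.Perm (Fin N)) : ℤ) * casorati φ (1 - N - n) x s := by
  have h : (fun j : Fin N => -(n + (j : ℕ))) = consecutive (1 - N - n) ∘ Fin.revPerm := by
    funext j
    simp only [Function.comp_apply, Fin.revPerm_apply, consecutive_apply, Fin.val_rev]
    omega
  rw [casorati_eq_casoratiDet, casorati_eq_casoratiDet]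
  change casoratiDet (fun m i => φ i m x s) (fun j : Fin N => -(n + (j : ℕ))) = _
  rw [h, casoratiDet_comp_perm]

section Flow

variable {M : ℕ} {φ : Fin (M + 1) → ℤ → ℝ → ℝ → ℝ} {ε : ℝ}
  {Λ Μ : ℝ → Matrix (Fin (M + 1)) (Fin (M + 1)) ℝ}

theorem casorati_solvesBilinearToda_of_hasDerivAt (hε : ε ^ 2 = 1)
    (hx : ∀ m x s, HasDerivAt (fun x i => φ i m x s)
      (ε • (fun i => φ i (m + 1) x s) + Λ x *ᵥ fun i => φ i m x s) x)
    (hs : ∀ m x s, HasDerivAt (fun s i => φ i m x s)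
      ((-ε) • (fun i => φ i (m + -1) x s) + Μ s *ᵥ fun i => φ i m x s) s) :
    SolvesBilinearToda (casorati φ) := by
  rw [casorati_eq_casoratiDet]
  refine solvesBilinearToda_of_hasDerivAt (a := fun x => (Λ x).trace) (b := fun s => (Μ s).trace)
    (X := fun n x s => casoratiDet (fun m i => φ i m x s) (Fin.snoc (consecutive n) (n + M + 1)))
    (Y := fun n x s => casoratiDet (fun m i => φ i m x s) (Fin.cons (n - 1) (consecutive (n + 1))))
    (W := fun n x s => shiftSum (casoratiDet fun m i => φ i m x s) (-1)
      (Fin.snoc (consecutive n) (n + M + 1))) hε (fun n x s => ?_) (fun n x s => ?_)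
    (fun n x s => ?_) (fun n x s => casoratiDet_consecutive_toda _ n)
  · simpa only [shiftSum_casoratiDet_consecutive_one] using
      hasDerivAt_casoratiDet (hx · x s) (consecutive n)
  · simpa only [shiftSum_casoratiDet_consecutive_neg_one, neg_mul] using
      hasDerivAt_casoratiDet (hs · x s) (consecutive n)
  · simpa only [neg_mul] using
      hasDerivAt_casoratiDet (hs · x s) (Fin.snoc (consecutive n) (n + M + 1))

theorem casorati_solvesBilinearToda_of_hasDerivAt_neg (hε : ε ^ 2 = 1)
    (hx : ∀ m x s, HasDerivAt (fun x i => φ i m x s)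
      (ε • (fun i => φ i (m + -1) x s) + Λ x *ᵥ fun i => φ i m x s) x)
    (hs : ∀ m x s, HasDerivAt (fun s i => φ i m x s)
      ((-ε) • (fun i => φ i (m + - -1) x s) + Μ s *ᵥ fun i => φ i m x s) s) :
    SolvesBilinearToda (casorati φ) := by
  have hψ := casorati_solvesBilinearToda_of_hasDerivAt (φ := fun i m => φ i (-m)) hε
    (fun m x s => by simpa only [neg_add] using hx (-m) x s)
    (fun m x s => by simpa only [neg_add] using hs (-m) x s)
  have hφ : casorati φ = fun n x s =>
      (Equiv.Perm.sign (Fin.revPerm : Equiv.Perm (Fin (M + 1))) : ℤ) *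
        casorati (fun i m => φ i (-m)) (1 - (M + 1 : ℕ) - n) x s := by
    funext n x s
    simp only [← casorati_comp_neg, neg_neg]
  rw [hφ]
  exact hψ.const_mul_comp_sub _ _

end Flow

theorem casoratian_solves_bilinear_toda_general
    (N : ℕ) (ε : ℝ) (hε : ε = 1 ∨ ε = -1) (δ : ℤ) (hδ : δ = 1 ∨ δ = -1)
    (φ : Fin N → ℤ → ℝ → ℝ → ℝ) (lam mu : Fin N → Fin N → ℝ → ℝ)
    (hreg : ∀ i n, ContDiff ℝ 2 (fun p : ℝ × ℝ => φ i n p.1 p.2))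
    (hx : ∀ i n (x s : ℝ), deriv (fun x' => φ i n x' s) x =
        ε * φ i (n + δ) x s + ∑ j, lam i j x * φ j n x s)
    (hs : ∀ i n (x s : ℝ), deriv (fun s' => φ i n x s') s =
        -ε * φ i (n - δ) x s + ∑ j, mu i j s * φ j n x s) :
    SolvesBilinearToda (casorati φ) := by
  rcases N with _ | M
  · rw [casorati_fin_zero]
    exact solvesBilinearToda_const 1
  have hε2 : ε ^ 2 = 1 := by rcases hε with rfl | rfl <;> norm_num
  have hdiff i m x s : DifferentiableAt ℝ (fun x' => φ i m x' s) x ∧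
      DifferentiableAt ℝ (fun s' => φ i m x s') s :=
    have hd := (hreg i m).differentiable (by norm_num) (x, s)
    ⟨hd.comp (f := fun x' => (x', s)) x (differentiableAt_id.prodMk (differentiableAt_const s)),
      hd.comp (f := fun s' => (x, s')) s ((differentiableAt_const x).prodMk differentiableAt_id)⟩
  have hφx m x s : HasDerivAt (fun x i => φ i m x s)
      (ε • (fun i => φ i (m + δ) x s) + (of fun i j => lam i j x) *ᵥ fun i => φ i m x s) x :=
    hasDerivAt_pi.2 fun i => by simpa [hx, mulVec, dotProduct] using (hdiff i m x s).1.hasDerivAt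
  have hφs m x s : HasDerivAt (fun s i => φ i m x s)
      ((-ε) • (fun i => φ i (m + -δ) x s) + (of fun i j => mu i j s) *ᵥ fun i => φ i m x s) s :=
    hasDerivAt_pi.2 fun i => by
      simpa [hs, mulVec, dotProduct, ← sub_eq_add_neg] using (hdiff i m x s).2.hasDerivAt
  rcases hδ with rfl | rfl
  · exact casorati_solvesBilinearToda_of_hasDerivAt hε2 hφx hφs
  · exact casorati_solvesBilinearToda_of_hasDerivAt_neg hε2 hφx hφs

/-- the general Casoratian formulation of the 2D Toda lattice equation. -/
theorem casoratian_solves_bilinear_toda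
    (N : ℕ) (hN : 1 ≤ N) (ε : ℝ) (hε : ε = 1 ∨ ε = -1) (δ : ℤ) (hδ : δ = 1 ∨ δ = -1)
    (φ : Fin N → ℤ → ℝ → ℝ → ℝ) (lam mu : Fin N → Fin N → ℝ → ℝ)
    (hreg : ∀ i n, ContDiff ℝ 2 (fun p : ℝ × ℝ => φ i n p.1 p.2))
    (hx : ∀ i n (x s : ℝ), deriv (fun x' => φ i n x' s) x =
        ε * φ i (n + δ) x s + ∑ j, lam i j x * φ j n x s)
    (hs : ∀ i n (x s : ℝ), deriv (fun s' => φ i n x s') s =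
        -ε * φ i (n - δ) x s + ∑ j, mu i j s * φ j n x s) :
    SolvesBilinearToda (casorati φ) :=
  casoratian_solves_bilinear_toda_general N ε hε δ hδ φ lam mu hreg hx hs
end

section
/- Let ε ∈ {1, −1} and N ≥ 1. Suppose φ_1, …, φ_N : ℤ × ℝ × ℝ → ℝ are differentiable in x, λ_{ij} : ℝ → ℝ (1 ≤ i,j ≤ N) are functions, and for all n ∈ ℤ, x, s ∈ ℝ and 1 ≤ i ≤ N: ∂φ_i(n,x,s)/∂x = ε φ_i(n+1,x,s) + Σ_{j=1}^N λ_{ij}(x) φ_j(n,x,s). Then for the generalized Casorati determinants |i_1,…,i_N| built from φ_1,…,φ_N: ∂|0,1,…,N−1|/∂x = ε |0,1,…,N−2,N| + (Σ_{i=1}^N λ_{ii}(x)) |0,1,…,N−1|, for all n, x, s. -/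
/-!
Write the Casorati matrix by columns `c_j = (φ_i(n + j))_i`. By Jacobi's formula the derivative of
its determinant is the sum over `j` of the determinants with `c_j` replaced by `∂c_j/∂x`, and
`∂c_j/∂x = ε c_{j+1} + Λ c_j` with `Λ = (λ_{ik}(x))`. The `ε`-part telescopes: every term with
`j < N - 1` has two equal columns, leaving `|0, …, N-2, N|`. The `Λ`-part is
`∑_j det (M with column j replaced by (Λ M)_j) = tr(adj M · Λ M) = tr Λ · det M` by Cramer's rule.
-/

/-- The generalized Casorati determinant `|i_1,…,i_N|`: the determinant of the `N×N` matrix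
whose `(i,j)` entry is `φ_i(n + i_j, x, s)`, where the column shifts are given by `idx`. -/
def gcas {N : ℕ} (φ : Fin N → ℤ → ℝ → ℝ → ℝ) (idx : Fin N → ℤ) (n : ℤ) (x s : ℝ) : ℝ :=
  Matrix.det (Matrix.of fun i j : Fin N => φ i (n + idx j) x s)

open Matrix Finset

theorem Matrix.hasDerivAt_det_s2 {𝕜 𝔸 n : Type*} [NontriviallyNormedField 𝕜] [NormedCommRing 𝔸]
    [NormedAlgebra 𝕜 𝔸] [Fintype n] [DecidableEq n] {A : 𝕜 → Matrix n n 𝔸} {A' : Matrix n n 𝔸}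
    {x : 𝕜}
    (h : ∀ i j, HasDerivAt (fun t => A t i j) (A' i j) x) :
    HasDerivAt (fun t => (A t).det) (∑ j, ((A x).updateCol j fun i => A' i j).det) x := by
  simp_rw [det_apply']
  refine (HasDerivAt.fun_sum fun σ _ =>
    (HasDerivAt.fun_finsetProd fun j _ => h (σ j) j).const_mul ((Equiv.Perm.sign σ : ℤ) : 𝔸))
    |>.congr_deriv ?_
  rw [sum_comm]
  refine sum_congr rfl fun σ _ => ?_
  rw [mul_sum]
  refine sum_congr rfl fun j _ => ?_
  rw [← mul_prod_erase univ _ (mem_univ j), updateCol_self, smul_eq_mul, mul_comm (A' _ _)]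
  congr 2
  exact prod_congr rfl fun k hk => (updateCol_ne (ne_of_mem_erase hk)).symm

theorem Matrix.sum_det_updateCol_mul_s2 {R n : Type*} [CommRing R] [Fintype n] [DecidableEq n]
    (L M : Matrix n n R) :
    ∑ j, (M.updateCol j ((L * M)ᵀ j)).det = L.trace * M.det := by
  simp_rw [← cramer_apply, cramer_eq_adjugate_mulVec]
  calc ∑ j, (adjugate M *ᵥ (L * M)ᵀ j) j = (adjugate M * (L * M)).trace := by
        simp only [trace, diag, mulVec, dotProduct, mul_apply, transpose_apply]
    _ = L.trace * M.det := by
        rw [trace_mul_comm, Matrix.mul_assoc, mul_adjugate, Matrix.mul_smul, Matrix.mul_one,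
          trace_smul, smul_eq_mul, mul_comm]

theorem Matrix.sum_det_updateCol_shift {R : Type*} [CommRing R] {N : ℕ} (hN : 1 ≤ N)
    (f : ℤ → Fin N → R) :
    ∑ j : Fin N, ((of fun i k : Fin N => f k i).updateCol j (f (j + 1))).det =
      (of fun i k : Fin N => f (if k.1 = N - 1 then N else k) i).det := by
  rw [sum_eq_single_of_mem ⟨N - 1, by omega⟩ (mem_univ _)]
  · congr 1
    ext i k
    by_cases hk : k.1 = N - 1
    · simp [updateCol_apply, Fin.ext_iff, hk, Nat.cast_sub hN]
    · simp [Fin.ext_iff, hk]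
  · intro j _ hj
    have hj' : j.1 + 1 < N := by
      have : j.1 ≠ N - 1 := Fin.val_ne_of_ne hj
      omega
    have hne : (⟨j.1 + 1, hj'⟩ : Fin N) ≠ j := by simp [Fin.ext_iff]
    exact det_zero_of_column_eq hne.symm fun i => by simp [updateCol_ne hne]

theorem deriv_x_casoratian_general
    (N : ℕ) (hN : 1 ≤ N) (ε : ℝ)
    (φ : Fin N → ℤ → ℝ → ℝ → ℝ) (lam : Fin N → Fin N → ℝ → ℝ)
    (hdiff : ∀ i n (s : ℝ), Differentiable ℝ (fun x => φ i n x s))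
    (hx : ∀ i n (x s : ℝ), deriv (fun x' => φ i n x' s) x =
        ε * φ i (n + 1) x s + ∑ j, lam i j x * φ j n x s) :
    ∀ (n : ℤ) (x s : ℝ),
      deriv (fun x' => gcas φ (fun j => (j.1 : ℤ)) n x' s) x =
        ε * gcas φ (fun j => if j.1 = N - 1 then (N : ℤ) else (j.1 : ℤ)) n x s +
          (∑ i, lam i i x) * gcas φ (fun j => (j.1 : ℤ)) n x s := by
  intro n x s
  let col : ℝ → ℤ → Fin N → ℝ := fun t m i => φ i (n + m) t s
  let M : ℝ → Matrix (Fin N) (Fin N) ℝ := fun t => of fun i j => col t j i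
  let Λ : Matrix (Fin N) (Fin N) ℝ := of fun i k => lam i k x
  have hcol : ∀ i j, HasDerivAt (fun t => M t i j)
      ((ε • col x (j + 1) + (Λ * M x)ᵀ j) i) x := by
    intro i j
    refine ((hdiff i (n + j) s) x).hasDerivAt.congr_deriv ?_
    rw [hx]
    simp [col, M, Λ, mul_apply, add_assoc, mul_comm]
  have hdet : HasDerivAt (fun t => gcas φ (fun j => (j.1 : ℤ)) n t s)
      (∑ j, ((M x).updateCol j (ε • col x (j + 1) + (Λ * M x)ᵀ j)).det) x :=
    hasDerivAt_det_s2 hcol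
  rw [hdet.deriv, sum_congr rfl fun j _ => by rw [det_updateCol_add, det_updateCol_smul],
    sum_add_distrib, ← mul_sum, sum_det_updateCol_shift hN (col x), sum_det_updateCol_mul_s2]
  rfl

/-- `∂|0,…,N−1|/∂x = ε |0,…,N−2,N| + (Σ_i λ_{ii}(x)) |0,…,N−1|`. -/
theorem deriv_x_casoratian
    (N : ℕ) (hN : 1 ≤ N) (ε : ℝ) (hε : ε = 1 ∨ ε = -1)
    (φ : Fin N → ℤ → ℝ → ℝ → ℝ) (lam : Fin N → Fin N → ℝ → ℝ)
    (hdiff : ∀ i n (s : ℝ), Differentiable ℝ (fun x => φ i n x s))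
    (hx : ∀ i n (x s : ℝ), deriv (fun x' => φ i n x' s) x =
        ε * φ i (n + 1) x s + ∑ j, lam i j x * φ j n x s) :
    ∀ (n : ℤ) (x s : ℝ),
      deriv (fun x' => gcas φ (fun j => (j.1 : ℤ)) n x' s) x =
        ε * gcas φ (fun j => if j.1 = N - 1 then (N : ℤ) else (j.1 : ℤ)) n x s +
          (∑ i, lam i i x) * gcas φ (fun j => (j.1 : ℤ)) n x s :=
  deriv_x_casoratian_general N hN ε φ lam hdiff hx
end

section
/- Let ε ∈ {1, −1}, δ ∈ {1, −1}, N ≥ 1. Suppose Φ : ℤ × ℝ × ℝ → ℝ^N is twice continuously differentiable in (x,s), A : ℝ → Matrix(N,N,ℝ) and B : ℝ → Matrix(N,N,ℝ) are functions, and for all n ∈ ℤ, x, s ∈ ℝ: ∂Φ(n,x,s)/∂x = ε Φ(n+δ,x,s) + A(x) Φ(n,x,s) and ∂Φ(n,x,s)/∂s = −ε Φ(n−δ,x,s) + B(s) Φ(n,x,s). Then for all n ∈ ℤ and x, s ∈ ℝ: (A(x) B(s) − B(s) A(x)) Φ(n,x,s) = 0. -/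
/-!
Differentiate the first equation in `s` and the second in `x`. Substituting the equations once
more, both mixed partials of `Φ n` consist of the same shift terms `-ε² Φ n`, `-ε A Φ (n - δ)`,
`ε B Φ (n + δ)` plus `A B Φ n`, resp. `B A Φ n`. Since `Φ n` is `C²`, its mixed partials agree
(Schwarz), so `(A B - B A) Φ n = 0`.
-/

variable {E : Type*} [NormedAddCommGroup E] [NormedSpace ℝ E]

theorem HasFDerivAt.hasDerivAt_comp_prodMk_left {g : ℝ × ℝ → E} {g' : ℝ × ℝ →L[ℝ] E} {x s : ℝ}
    (h : HasFDerivAt g g' (x, s)) : HasDerivAt (fun x' => g (x', s)) (g' (1, 0)) x :=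
  h.comp_hasDerivAt x ((hasDerivAt_id x).prodMk (hasDerivAt_const x s))

theorem HasFDerivAt.hasDerivAt_comp_prodMk_right {g : ℝ × ℝ → E} {g' : ℝ × ℝ →L[ℝ] E} {x s : ℝ}
    (h : HasFDerivAt g g' (x, s)) : HasDerivAt (fun s' => g (x, s')) (g' (0, 1)) s :=
  h.comp_hasDerivAt s ((hasDerivAt_const s x).prodMk (hasDerivAt_id s))

theorem ContDiff.deriv_deriv_comm {f : ℝ → ℝ → E}
    (hf : ContDiff ℝ 2 (fun p : ℝ × ℝ => f p.1 p.2)) (x s : ℝ) :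
    deriv (fun s' => deriv (fun x' => f x' s') x) s =
      deriv (fun x' => deriv (fun s' => f x' s') s) x := by
  set g : ℝ × ℝ → E := fun p => f p.1 p.2
  have hg : Differentiable ℝ g := hf.differentiable two_ne_zero
  have hg' : Differentiable ℝ (fderiv ℝ g) :=
    (hf.fderiv_right (m := 1) one_add_one_eq_two.le).differentiable one_ne_zero
  have hpartial (v p : ℝ × ℝ) :
      HasFDerivAt (fun q => fderiv ℝ g q v) ((fderiv ℝ (fderiv ℝ g) p).flip v) p :=
    (hg' p).hasFDerivAt.clm_apply (hasFDerivAt_const v p) |>.congr_fderiv (by ext <;> simp)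
  have hx' : (fun s' => deriv (fun x' => f x' s') x) = fun s' => fderiv ℝ g (x, s') (1, 0) :=
    funext fun s' => (hg (x, s')).hasFDerivAt.hasDerivAt_comp_prodMk_left.deriv
  have hs' : (fun x' => deriv (fun s' => f x' s') s) = fun x' => fderiv ℝ g (x', s) (0, 1) :=
    funext fun x' => (hg (x', s)).hasFDerivAt.hasDerivAt_comp_prodMk_right.deriv
  rw [hx', hs', (hpartial _ _).hasDerivAt_comp_prodMk_right.deriv,
    (hpartial _ _).hasDerivAt_comp_prodMk_left.deriv]
  exact hf.contDiffAt.isSymmSndFDerivAt (by simp) _ _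

theorem commutator_apply_eq_zero_of_compatible (ε : ℝ) (δ : ℤ) (Φ : ℤ → ℝ → ℝ → E)
    (a b : ℝ → E →L[ℝ] E)
    (hreg : ∀ n, ContDiff ℝ 2 (fun p : ℝ × ℝ => Φ n p.1 p.2))
    (hx : ∀ n (x s : ℝ), deriv (fun x' => Φ n x' s) x = ε • Φ (n + δ) x s + a x (Φ n x s))
    (hs : ∀ n (x s : ℝ), deriv (fun s' => Φ n x s') s = (-ε) • Φ (n - δ) x s + b s (Φ n x s))
    (n : ℤ) (x s : ℝ) : (a x * b s - b s * a x) (Φ n x s) = 0 := by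
  have hΦ (m : ℤ) : Differentiable ℝ (fun p : ℝ × ℝ => Φ m p.1 p.2) :=
    (hreg m).differentiable two_ne_zero
  have hΦx (m : ℤ) : HasDerivAt (fun x' => Φ m x' s) (ε • Φ (m + δ) x s + a x (Φ m x s)) x :=
    hx m x s ▸ (hΦ m (x, s)).hasFDerivAt.hasDerivAt_comp_prodMk_left.differentiableAt.hasDerivAt
  have hΦs (m : ℤ) : HasDerivAt (fun s' => Φ m x s') ((-ε) • Φ (m - δ) x s + b s (Φ m x s)) s :=
    hs m x s ▸ (hΦ m (x, s)).hasFDerivAt.hasDerivAt_comp_prodMk_right.differentiableAt.hasDerivAt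
  have hsx : deriv (fun s' => deriv (fun x' => Φ n x' s') x) s =
      ε • ((-ε) • Φ n x s + b s (Φ (n + δ) x s)) + a x ((-ε) • Φ (n - δ) x s + b s (Φ n x s)) := by
    simp only [hx]
    have h := ((hΦs (n + δ)).const_smul ε).add ((a x).hasFDerivAt.comp_hasDerivAt s (hΦs n))
    rw [add_sub_cancel_right] at h
    exact h.deriv
  have hxs : deriv (fun x' => deriv (fun s' => Φ n x' s') s) x =
      (-ε) • (ε • Φ n x s + a x (Φ (n - δ) x s)) + b s (ε • Φ (n + δ) x s + a x (Φ n x s)) := by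
    simp only [hs]
    have h := ((hΦx (n - δ)).const_smul (-ε)).add ((b s).hasFDerivAt.comp_hasDerivAt x (hΦx n))
    rw [sub_add_cancel] at h
    exact h.deriv
  have hcomm := (hreg n).deriv_deriv_comm x s
  rw [hsx, hxs] at hcomm
  simp only [map_add, map_smul] at hcomm
  show a x (b s (Φ n x s)) - b s (a x (Φ n x s)) = 0
  linear_combination (norm := module) hcomm

theorem commutator_mulVec_eq_zero_general
    (N : ℕ) (ε : ℝ) (δ : ℤ)
    (Φ : ℤ → ℝ → ℝ → (Fin N → ℝ))
    (A B : ℝ → Matrix (Fin N) (Fin N) ℝ)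
    (hreg : ∀ n, ContDiff ℝ 2 (fun p : ℝ × ℝ => Φ n p.1 p.2))
    (hx : ∀ n (x s : ℝ), deriv (fun x' => Φ n x' s) x =
        ε • Φ (n + δ) x s + (A x).mulVec (Φ n x s))
    (hs : ∀ n (x s : ℝ), deriv (fun s' => Φ n x s') s =
        (-ε) • Φ (n - δ) x s + (B s).mulVec (Φ n x s)) :
    ∀ (n : ℤ) (x s : ℝ), (A x * B s - B s * A x).mulVec (Φ n x s) = 0 := by
  intro n x s
  rw [Matrix.sub_mulVec, ← Matrix.mulVec_mulVec, ← Matrix.mulVec_mulVec]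
  exact commutator_apply_eq_zero_of_compatible ε δ Φ
    (fun x => (A x).mulVecLin.toContinuousLinearMap)
    (fun s => (B s).mulVecLin.toContinuousLinearMap) hreg hx hs n x s

/-- compatibility of the coupled linear differential-difference system implies
`(A(x) B(s) − B(s) A(x)) Φ(n,x,s) = 0`. -/
theorem commutator_mulVec_eq_zero
    (N : ℕ) (hN : 1 ≤ N) (ε : ℝ) (hε : ε = 1 ∨ ε = -1) (δ : ℤ) (hδ : δ = 1 ∨ δ = -1)
    (Φ : ℤ → ℝ → ℝ → (Fin N → ℝ))
    (A B : ℝ → Matrix (Fin N) (Fin N) ℝ)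
    (hreg : ∀ n, ContDiff ℝ 2 (fun p : ℝ × ℝ => Φ n p.1 p.2))
    (hx : ∀ n (x s : ℝ), deriv (fun x' => Φ n x' s) x =
        ε • Φ (n + δ) x s + (A x).mulVec (Φ n x s))
    (hs : ∀ n (x s : ℝ), deriv (fun s' => Φ n x s') s =
        (-ε) • Φ (n - δ) x s + (B s).mulVec (Φ n x s)) :
    ∀ (n : ℤ) (x s : ℝ), (A x * B s - B s * A x).mulVec (Φ n x s) = 0 :=
  commutator_mulVec_eq_zero_general N ε δ Φ A B hreg hx hs
end

section
/- Let ε ∈ {1, −1}, δ ∈ {1, −1}, N ≥ 1, and let p_1, …, p_N be nonzero real numbers and q_1, …, q_N real numbers. Suppose A : ℝ → Matrix(N,N,ℝ) and B : ℝ → Matrix(N,N,ℝ) are continuous and satisfy, for all x, s ∈ ℝ: A(x) B(s) = B(s) A(x), A(x)·(∫₀ˣ A(x') dx') = (∫₀ˣ A(x') dx')·A(x), and B(s)·(∫₀ˢ B(s') ds') = (∫₀ˢ B(s') ds')·B(s). Define Φ(n,x,s) = exp(∫₀ˣ A(x') dx' + ∫₀ˢ B(s') ds') · v(n,x,s), where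 exp is the matrix exponential and v(n,x,s) ∈ ℝ^N has i-th component p_i^n · exp(ε(p_i^δ x − p_i^{−δ} s) + q_i). Then for all n ∈ ℤ and x, s ∈ ℝ: ∂Φ(n,x,s)/∂x = ε Φ(n+δ,x,s) + A(x) Φ(n,x,s) and ∂Φ(n,x,s)/∂s = −ε Φ(n−δ,x,s) + B(s) Φ(n,x,s). -/
/-!
Both equations come from the product rule applied to `Φ = E *ᵥ v` with
`E(x, s) = exp (∫₀ˣ A + ∫₀ˢ B)`. Since `A x` commutes with `∫₀ˣ A` and with `∫₀ˢ B`, it commutes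
with the exponent. In a direction `H` commuting with `X` one has `exp (X + tH) = exp X * exp (tH)`,
so the (Fréchet) derivative of `exp` at `X` sends `H` to `exp X * H`; hence
`∂ₓE = E * A x = A x * E`. The remaining term `E *ᵥ ∂ₓv` equals `ε • E *ᵥ v(n + δ)` because `∂ₓ`
multiplies the `i`-th component of `v` by `ε pᵢ^δ`. The `s`-equation is the same argument with
the roles of `A` and `B` exchanged.
-/

/-- The entrywise integral `∫₀ˣ A(x') dx'` of a matrix-valued function. -/
noncomputable def matIntegral {N : ℕ} (A : ℝ → Matrix (Fin N) (Fin N) ℝ) (x : ℝ) :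
    Matrix (Fin N) (Fin N) ℝ :=
  Matrix.of fun i j => ∫ t in (0:ℝ)..x, A t i j

open NormedSpace
open scoped Matrix

section ExpDeriv

variable {𝕂 𝔸 : Type*} [RCLike 𝕂] [NormedRing 𝔸] [NormedAlgebra 𝕂 𝔸] [CompleteSpace 𝔸]

theorem fderiv_exp_apply_of_commute {X H : 𝔸} (h : Commute X H) :
    fderiv 𝕂 exp X H = exp X * H := by
  have hline : HasDerivAt (fun t : 𝕂 => X + t • H) H 0 := by
    simpa using ((hasDerivAt_id (0 : 𝕂)).smul_const H).const_add X
  have hchain := (exp_analytic (𝕂 := 𝕂) X).differentiableAt.hasFDerivAt.comp_hasDerivAt_of_eq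
    (0 : 𝕂) hline (by simp)
  have hball (Y : 𝔸) : Y ∈ Metric.eball 0 (expSeries 𝕂 𝔸).radius := by
    simp [expSeries_radius_eq_top]
  have hsplit : HasDerivAt (fun t : 𝕂 => exp (X + t • H)) (exp X * H) 0 := by
    have := (hasDerivAt_exp_smul_const H (0 : 𝕂)).const_mul (exp X)
    rw [zero_smul, exp_zero, one_mul] at this
    exact this.congr_of_eventuallyEq <| .of_forall fun t =>
      exp_add_of_commute_of_mem_ball (h.smul_right t) (hball _) (hball _)
  exact hchain.unique hsplit

theorem HasDerivAt.exp_of_commute {G : 𝕂 → 𝔸} {G' : 𝔸} {x : 𝕂} (hG : HasDerivAt G G' x)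
    (hc : Commute (G x) G') :
    HasDerivAt (fun t => NormedSpace.exp (G t)) (NormedSpace.exp (G x) * G') x := by
  rw [← fderiv_exp_apply_of_commute (𝕂 := 𝕂) hc]
  exact (exp_analytic (G x)).differentiableAt.hasFDerivAt.comp_hasDerivAt x hG

end ExpDeriv

section MatrixCalculus

-- Any norm inducing the product topology would do: neither `exp` nor entrywise derivatives see it.
attribute [local instance] Matrix.linftyOpNormedAddCommGroup Matrix.linftyOpNormedSpace
  Matrix.linftyOpNormedRing Matrix.linftyOpNormedAlgebra

variable {m n : Type*} [Fintype m] [Fintype n]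

theorem Matrix.hasDerivAt_iff {F : ℝ → Matrix m n ℝ} {F' : Matrix m n ℝ} {x : ℝ} :
    HasDerivAt F F' x ↔ ∀ i j, HasDerivAt (fun t => F t i j) (F' i j) x := by
  refine hasDerivAt_iff_tendsto_slope.trans ?_
  refine (tendsto_pi_nhds (A := fun _ : m => n → ℝ)).trans (forall_congr' fun i => ?_)
  exact tendsto_pi_nhds.trans (forall_congr' fun j => hasDerivAt_iff_tendsto_slope.symm)

theorem HasDerivAt.matrix_mulVec {F : ℝ → Matrix m n ℝ} {F' : Matrix m n ℝ} {v : ℝ → n → ℝ}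
    {v' : n → ℝ} {x : ℝ} (hF : HasDerivAt F F' x) (hv : HasDerivAt v v' x) :
    HasDerivAt (fun t => F t *ᵥ v t) (F' *ᵥ v x + F x *ᵥ v') x := by
  refine hasDerivAt_pi.2 fun i => ?_
  refine (HasDerivAt.fun_sum (u := Finset.univ) fun k _ =>
    (Matrix.hasDerivAt_iff.1 hF i k).fun_mul (hasDerivAt_pi.1 hv k)).congr_deriv ?_
  simp only [Finset.sum_add_distrib, Pi.add_apply, Matrix.mulVec, dotProduct]

variable {N : ℕ}

theorem hasDerivAt_matIntegral {C : ℝ → Matrix (Fin N) (Fin N) ℝ} (hC : Continuous C) (x : ℝ) :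
    HasDerivAt (matIntegral C) (C x) x :=
  Matrix.hasDerivAt_iff.2 fun i j =>
    ((hC.matrix_elem i j).integral_hasStrictDerivAt 0 x).hasDerivAt

theorem hasDerivAt_exp_matIntegral_add_mulVec {C : ℝ → Matrix (Fin N) (Fin N) ℝ}
    (hC : Continuous C) {K : Matrix (Fin N) (Fin N) ℝ} {x : ℝ}
    (hCint : Commute (C x) (matIntegral C x)) (hCK : Commute (C x) K)
    {v : ℝ → Fin N → ℝ} {v' : Fin N → ℝ} (hv : HasDerivAt v v' x) :
    HasDerivAt (fun t => exp (matIntegral C t + K) *ᵥ v t)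
      (exp (matIntegral C x + K) *ᵥ v' + C x *ᵥ (exp (matIntegral C x + K) *ᵥ v x)) x := by
  have hcomm : Commute (C x) (matIntegral C x + K) := hCint.add_right hCK
  have hexp := ((hasDerivAt_matIntegral hC x).add_const K).exp_of_commute hcomm.symm
  refine (hexp.matrix_mulVec hv).congr_deriv ?_
  rw [add_comm, Matrix.mulVec_mulVec]
  exact congrArg (_ + · *ᵥ v x) hcomm.exp_right.eq.symm

end MatrixCalculus

section MatIntegral

variable {N : ℕ} {C : ℝ → Matrix (Fin N) (Fin N) ℝ} {s : ℝ}

theorem mul_matIntegral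
    (hC : ∀ i j, IntervalIntegrable (fun t => C t i j) MeasureTheory.volume 0 s)
    (D : Matrix (Fin N) (Fin N) ℝ) : D * matIntegral C s = matIntegral (fun t => D * C t) s := by
  ext i j
  simp only [Matrix.mul_apply, matIntegral, Matrix.of_apply]
  rw [intervalIntegral.integral_finsetSum fun k _ => (hC k j).const_mul (D i k)]
  simp only [intervalIntegral.integral_const_mul]

theorem matIntegral_mul
    (hC : ∀ i j, IntervalIntegrable (fun t => C t i j) MeasureTheory.volume 0 s)
    (D : Matrix (Fin N) (Fin N) ℝ) : matIntegral C s * D = matIntegral (fun t => C t * D) s := by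
  ext i j
  simp only [Matrix.mul_apply, matIntegral, Matrix.of_apply]
  rw [intervalIntegral.integral_finsetSum fun k _ => (hC i k).mul_const (D k j)]
  simp only [intervalIntegral.integral_mul_const]

theorem Commute.matIntegral_right {D : Matrix (Fin N) (Fin N) ℝ} (hC : Continuous C)
    (h : ∀ t, Commute D (C t)) (s : ℝ) : Commute D (matIntegral C s) := by
  have hint i j : IntervalIntegrable (fun t => C t i j) MeasureTheory.volume 0 s :=
    (hC.matrix_elem i j).intervalIntegrable 0 s
  rw [Commute, SemiconjBy, mul_matIntegral hint, matIntegral_mul hint]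
  simp_rw [(h _).eq]

end MatIntegral

section WaveVector

variable {ι : Type*} {p : ι → ℝ}

noncomputable def waveVector (p q : ι → ℝ) (ε : ℝ) (δ n : ℤ) (x s : ℝ) : ι → ℝ :=
  fun i => p i ^ n * Real.exp (ε * (p i ^ δ * x - p i ^ (-δ) * s) + q i)

theorem hasDerivAt_waveVector_x (hp : ∀ i, p i ≠ 0) (q : ι → ℝ) (ε : ℝ) (δ n : ℤ) (x s : ℝ) :
    HasDerivAt (fun x' => waveVector p q ε δ n x' s) (ε • waveVector p q ε δ (n + δ) x s) x := by
  refine hasDerivAt_pi.2 fun i => ?_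
  have hphase : HasDerivAt (fun x' => ε * (p i ^ δ * x' - p i ^ (-δ) * s) + q i)
      (ε * p i ^ δ) x := by
    simpa using ((((hasDerivAt_id x).const_mul (p i ^ δ)).sub_const (p i ^ (-δ) * s)).const_mul
      ε).add_const (q i)
  refine (hphase.exp.const_mul (p i ^ n)).congr_deriv ?_
  simp only [waveVector, Pi.smul_apply, smul_eq_mul, zpow_add₀ (hp i)]
  ring

theorem hasDerivAt_waveVector_s (hp : ∀ i, p i ≠ 0) (q : ι → ℝ) (ε : ℝ) (δ n : ℤ) (x s : ℝ) :
    HasDerivAt (fun s' => waveVector p q ε δ n x s') ((-ε) • waveVector p q ε δ (n - δ) x s) s := by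
  refine hasDerivAt_pi.2 fun i => ?_
  have hphase : HasDerivAt (fun s' => ε * (p i ^ δ * x - p i ^ (-δ) * s') + q i)
      (-(ε * p i ^ (-δ))) s := by
    simpa using ((((hasDerivAt_id s).const_mul (p i ^ (-δ))).const_sub (p i ^ δ * x)).const_mul
      ε).add_const (q i)
  refine (hphase.exp.const_mul (p i ^ n)).congr_deriv ?_
  simp only [waveVector, Pi.smul_apply, smul_eq_mul, sub_eq_add_neg n, zpow_add₀ (hp i)]
  ring

end WaveVector

theorem explicit_solution_of_linear_system_general
    (N : ℕ) (ε : ℝ) (δ : ℤ)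
    (p q : Fin N → ℝ) (hp : ∀ i, p i ≠ 0)
    (A B : ℝ → Matrix (Fin N) (Fin N) ℝ) (hA : Continuous A) (hB : Continuous B)
    (hcomm : ∀ x s : ℝ, A x * B s = B s * A x)
    (hAint : ∀ x : ℝ, A x * matIntegral A x = matIntegral A x * A x)
    (hBint : ∀ s : ℝ, B s * matIntegral B s = matIntegral B s * B s)
    (Φ : ℤ → ℝ → ℝ → (Fin N → ℝ))
    (hΦ : ∀ (n : ℤ) (x s : ℝ), Φ n x s =
      (NormedSpace.exp (matIntegral A x + matIntegral B s)).mulVec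
        (fun i => p i ^ n * Real.exp (ε * (p i ^ δ * x - p i ^ (-δ) * s) + q i))) :
    ∀ (n : ℤ) (x s : ℝ),
      HasDerivAt (fun x' => Φ n x' s) (ε • Φ (n + δ) x s + (A x).mulVec (Φ n x s)) x ∧
      HasDerivAt (fun s' => Φ n x s') ((-ε) • Φ (n - δ) x s + (B s).mulVec (Φ n x s)) s := by
  intro n x s
  have hΦ' (n : ℤ) (x s : ℝ) :
      Φ n x s = exp (matIntegral A x + matIntegral B s) *ᵥ waveVector p q ε δ n x s := hΦ n x s
  simp only [hΦ']
  constructor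
  · have hAB : Commute (A x) (matIntegral B s) := .matIntegral_right hB (hcomm x) s
    have hx := hasDerivAt_exp_matIntegral_add_mulVec hA (hAint x) hAB
      (hasDerivAt_waveVector_x hp q ε δ n x s)
    rwa [Matrix.mulVec_smul] at hx
  · have hBA : Commute (B s) (matIntegral A x) :=
      .matIntegral_right hA (fun t => (hcomm t s).symm) x
    have hs := hasDerivAt_exp_matIntegral_add_mulVec hB (hBint s) hBA
      (hasDerivAt_waveVector_s hp q ε δ n x s)
    simp only [add_comm (matIntegral A _)]
    rwa [Matrix.mulVec_smul] at hs

/-- under the commutation conditions, the explicit vector-valued function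
`Φ(n,x,s) = exp(∫₀ˣ A + ∫₀ˢ B) · (pᵢⁿ e^{ε(pᵢ^δ x − pᵢ^{−δ} s) + qᵢ})ᵢ` solves the coupled
linear differential-difference system. -/
theorem explicit_solution_of_linear_system
    (N : ℕ) (hN : 1 ≤ N) (ε : ℝ) (hε : ε = 1 ∨ ε = -1) (δ : ℤ) (hδ : δ = 1 ∨ δ = -1)
    (p q : Fin N → ℝ) (hp : ∀ i, p i ≠ 0)
    (A B : ℝ → Matrix (Fin N) (Fin N) ℝ) (hA : Continuous A) (hB : Continuous B)
    (hcomm : ∀ x s : ℝ, A x * B s = B s * A x)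
    (hAint : ∀ x : ℝ, A x * matIntegral A x = matIntegral A x * A x)
    (hBint : ∀ s : ℝ, B s * matIntegral B s = matIntegral B s * B s)
    (Φ : ℤ → ℝ → ℝ → (Fin N → ℝ))
    (hΦ : ∀ (n : ℤ) (x s : ℝ), Φ n x s =
      (NormedSpace.exp (matIntegral A x + matIntegral B s)).mulVec
        (fun i => p i ^ n * Real.exp (ε * (p i ^ δ * x - p i ^ (-δ) * s) + q i))) :
    ∀ (n : ℤ) (x s : ℝ),
      HasDerivAt (fun x' => Φ n x' s) (ε • Φ (n + δ) x s + (A x).mulVec (Φ n x s)) x ∧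
      HasDerivAt (fun s' => Φ n x s') ((-ε) • Φ (n - δ) x s + (B s).mulVec (Φ n x s)) s :=
  explicit_solution_of_linear_system_general N ε δ p q hp A B hA hB hcomm hAint hBint Φ hΦ
end

section
/- Let ε ∈ {1, −1}, δ ∈ {1, −1}, M ≥ 1, let p_j (1 ≤ j ≤ M) be nonzero real numbers and q_j real numbers. For λ ∈ ℝ define φ(n,x,s;λ) = Σ_{j=1}^M p_j^n · exp((ε p_j^δ + λ) x − (ε p_j^{−δ} − λ) s + q_j), and for m ≥ 0 define ψ_m(n,x,s;λ) = (1/m!) ∂^m φ(n,x,s;λ)/∂λ^m, with ψ_{−1} := 0. Then for all m ≥ 0, n ∈ ℤ, x, s ∈ ℝ and λ ∈ ℝ: ∂ψ_m/∂x = ε ψ_m(n+δ) + λ ψ_m(n) + ψ_{m−1}(n) and ∂ψ_m/∂s = −ε ψ_m(n−δ) + λ ψ_m(n) + ψ_{m−1}(n); that is, the vector (ψ_0, ψ_1, …, ψ_k) satisfies the coupled linear differential-difference system whose coefficient matrices A = B are the lower-triangular Jordan block with λ on the diagonal and 1 on the subdiagonal. -/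
/-!
Every exponent in `φ` depends on `λ` only through the summand `λ (x + s)`, so `∂_λ φ = (x + s) φ`
and hence `ψ_m = (x + s)^m / m! · φ`. The `x`- and `s`-derivatives of `φ` produce the shift
`n ↦ n ± δ` (from `p_j^n p_j^{±δ} = p_j^{n ± δ}`) plus `λ φ`, while differentiating the prefactor
`(x + s)^m / m!` gives `(x + s)^(m-1) / (m-1)!`, i.e. the subdiagonal term `ψ_{m-1}`.
-/

section Calculus

open scoped Nat

variable {𝕜 : Type*} [NontriviallyNormedField 𝕜]

theorem iteratedDeriv_eq_pow_mul_of_hasDerivAt {f : 𝕜 → 𝕜} {c : 𝕜}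
    (hf : ∀ t, HasDerivAt f (c * f t) t) (m : ℕ) :
    iteratedDeriv m f = fun t => c ^ m * f t := by
  induction m with
  | zero => ext; simp
  | succ m ih =>
    ext t
    rw [iteratedDeriv_succ, ih, ((hf t).const_mul (c ^ m)).deriv]
    ring

variable [CharZero 𝕜]

theorem hasDerivAt_pow_div_factorial (m : ℕ) (t : 𝕜) :
    HasDerivAt (fun t : 𝕜 => t ^ m / m !)
      (if m = 0 then 0 else t ^ (m - 1) / (m - 1)!) t := by
  cases m with
  | zero => simpa using hasDerivAt_const t (1 : 𝕜)
  | succ k =>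
    refine ((hasDerivAt_pow (k + 1) t).div_const _).congr_deriv ?_
    rw [if_neg k.succ_ne_zero, Nat.factorial_succ, Nat.add_sub_cancel]
    have : (k ! : 𝕜) ≠ 0 := Nat.cast_ne_zero.mpr k.factorial_ne_zero
    push_cast
    field_simp

theorem HasDerivAt.pow_div_factorial_mul {u E : 𝕜 → 𝕜} {t A l : 𝕜} (m : ℕ)
    (hu : HasDerivAt u 1 t) (hE : HasDerivAt E (A + l * E t) t) :
    HasDerivAt (fun t => u t ^ m / m ! * E t)
      (u t ^ m / m ! * A + l * (u t ^ m / m ! * E t) +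
        if m = 0 then 0 else u t ^ (m - 1) / (m - 1)! * E t) t :=
  (((hasDerivAt_pow_div_factorial m (u t)).comp t hu).mul hE).congr_deriv <| by
    split_ifs <;> simp only [Function.comp_apply] <;> ring

end Calculus

theorem hasDerivAt_sum_mul_exp {ι : Type*} (S : Finset ι) (a c : ι → ℝ) {g : ι → ℝ → ℝ}
    {t : ℝ} (hg : ∀ j ∈ S, HasDerivAt (g j) (c j) t) :
    HasDerivAt (fun t => ∑ j ∈ S, a j * Real.exp (g j t))
      (∑ j ∈ S, c j * (a j * Real.exp (g j t))) t :=
  HasDerivAt.fun_sum fun j hj => ((hg j hj).exp.const_mul (a j)).congr_deriv (by ring)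

section ExpSum

open Finset

variable {ι : Type*} [Fintype ι] (ε : ℝ) (δ : ℤ) (p q : ι → ℝ)

noncomputable def expSum (n : ℤ) (x s l : ℝ) : ℝ :=
  ∑ j, p j ^ n * Real.exp ((ε * p j ^ δ + l) * x - (ε * p j ^ (-δ) - l) * s + q j)

theorem hasDerivAt_expSum_lambda (n : ℤ) (x s l : ℝ) :
    HasDerivAt (fun l => expSum ε δ p q n x s l) ((x + s) * expSum ε δ p q n x s l) l := by
  refine (hasDerivAt_sum_mul_exp _ _ (fun _ => x + s) fun j _ => ?_).congr_deriv (mul_sum ..).symm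
  exact (((((hasDerivAt_id' l).const_add _).mul_const x).sub
    (((hasDerivAt_id' l).const_sub _).mul_const s)).add_const _).congr_deriv (by ring)

theorem iteratedDeriv_expSum_lambda (m : ℕ) (n : ℤ) (x s l : ℝ) :
    iteratedDeriv m (fun l => expSum ε δ p q n x s l) l =
      (x + s) ^ m * expSum ε δ p q n x s l :=
  congrFun (iteratedDeriv_eq_pow_mul_of_hasDerivAt (hasDerivAt_expSum_lambda ε δ p q n x s) m) l

theorem hasDerivAt_expSum_x (hp : ∀ j, p j ≠ 0) (n : ℤ) (x s l : ℝ) :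
    HasDerivAt (fun x => expSum ε δ p q n x s l)
      (ε * expSum ε δ p q (n + δ) x s l + l * expSum ε δ p q n x s l) x := by
  refine (hasDerivAt_sum_mul_exp _ _ (fun j => ε * p j ^ δ + l) fun j _ => ?_).congr_deriv ?_
  · exact ((((hasDerivAt_id' x).const_mul _).sub_const _).add_const _).congr_deriv (mul_one _)
  · simp only [expSum, mul_sum, ← sum_add_distrib]
    refine sum_congr rfl fun j _ => ?_
    rw [zpow_add₀ (hp j)]
    ring

theorem hasDerivAt_expSum_s (hp : ∀ j, p j ≠ 0) (n : ℤ) (x s l : ℝ) :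
    HasDerivAt (fun s => expSum ε δ p q n x s l)
      (-ε * expSum ε δ p q (n - δ) x s l + l * expSum ε δ p q n x s l) s := by
  refine (hasDerivAt_sum_mul_exp _ _ (fun j => -(ε * p j ^ (-δ) - l)) fun j _ => ?_).congr_deriv
    ?_
  · exact ((((hasDerivAt_id' s).const_mul _).const_sub _).add_const _).congr_deriv (by ring)
  · simp only [expSum, mul_sum, ← sum_add_distrib]
    refine sum_congr rfl fun j _ => ?_
    rw [sub_eq_add_neg n δ, zpow_add₀ (hp j)]
    ring

end ExpSum

theorem jordan_block_solutions_general
    (M : ℕ) (ε : ℝ) (δ : ℤ)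
    (p : Fin M → ℝ) (hp : ∀ j, p j ≠ 0) (q : Fin M → ℝ)
    (φ : ℤ → ℝ → ℝ → ℝ → ℝ)
    (hφ : ∀ (n : ℤ) (x s l : ℝ), φ n x s l =
      ∑ j, p j ^ n * Real.exp ((ε * p j ^ δ + l) * x - (ε * p j ^ (-δ) - l) * s + q j))
    (ψ : ℕ → ℤ → ℝ → ℝ → ℝ → ℝ)
    (hψ : ∀ (m : ℕ) (n : ℤ) (x s l : ℝ),
      ψ m n x s l = (1 / (m.factorial : ℝ)) * iteratedDeriv m (fun l' => φ n x s l') l) :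
    ∀ (m : ℕ) (n : ℤ) (x s l : ℝ),
      deriv (fun x' => ψ m n x' s l) x =
        ε * ψ m (n + δ) x s l + l * ψ m n x s l +
          (if m = 0 then 0 else ψ (m - 1) n x s l) ∧
      deriv (fun s' => ψ m n x s' l) s =
        -ε * ψ m (n - δ) x s l + l * ψ m n x s l +
          (if m = 0 then 0 else ψ (m - 1) n x s l) := by
  obtain rfl : φ = expSum ε δ p q := by ext n x s l; exact hφ n x s l
  have hψ_eq : ∀ m n x s l,
      ψ m n x s l = (x + s) ^ m / m.factorial * expSum ε δ p q n x s l := by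
    intro m n x s l
    rw [hψ, iteratedDeriv_expSum_lambda]
    ring
  intro m n x s l
  simp only [hψ_eq]
  constructor
  · refine (((hasDerivAt_id' x).add_const s).pow_div_factorial_mul m
      (hasDerivAt_expSum_x ε δ p q hp n x s l)).deriv.trans ?_
    ring
  · refine (((hasDerivAt_id' s).const_add x).pow_div_factorial_mul m
      (hasDerivAt_expSum_s ε δ p q hp n x s l)).deriv.trans ?_
    ring

/-- the normalized `λ`-derivatives `ψ_m = (1/m!) ∂_λ^m φ` of the exponential sum
`φ(n,x,s;λ) = Σ_j p_jⁿ exp((ε p_j^δ + λ)x − (ε p_j^{−δ} − λ)s + q_j)` satisfy the coupled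
linear differential-difference system with Jordan-block coefficient matrices (`ψ_{−1} := 0`). -/
theorem jordan_block_solutions
    (M : ℕ) (hM : 1 ≤ M) (ε : ℝ) (hε : ε = 1 ∨ ε = -1) (δ : ℤ) (hδ : δ = 1 ∨ δ = -1)
    (p : Fin M → ℝ) (hp : ∀ j, p j ≠ 0) (q : Fin M → ℝ)
    (φ : ℤ → ℝ → ℝ → ℝ → ℝ)
    (hφ : ∀ (n : ℤ) (x s l : ℝ), φ n x s l =
      ∑ j, p j ^ n * Real.exp ((ε * p j ^ δ + l) * x - (ε * p j ^ (-δ) - l) * s + q j))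
    (ψ : ℕ → ℤ → ℝ → ℝ → ℝ → ℝ)
    (hψ : ∀ (m : ℕ) (n : ℤ) (x s l : ℝ),
      ψ m n x s l = (1 / (m.factorial : ℝ)) * iteratedDeriv m (fun l' => φ n x s l') l) :
    ∀ (m : ℕ) (n : ℤ) (x s l : ℝ),
      deriv (fun x' => ψ m n x' s l) x =
        ε * ψ m (n + δ) x s l + l * ψ m n x s l +
          (if m = 0 then 0 else ψ (m - 1) n x s l) ∧
      deriv (fun s' => ψ m n x s' l) s =
        -ε * ψ m (n - δ) x s l + l * ψ m n x s l +
          (if m = 0 then 0 else ψ (m - 1) n x s l) :=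
  jordan_block_solutions_general M ε δ p hp q φ hφ ψ hψ
end
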